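/- Let n ≥ 2, let X_1,…,X_{n+1} ∈ ℝ and Y_1,…,Y_n ∈ ℝ, and for a provisional value y ∈ ℝ set Y_{n+1} = y and define μ_i(y) = (Σ_{j=1}^{n+1} X_j) + min_{j ∈ {1,…,n+1}, j ≠ i} Y_j + Y_i for i = 1,…,n+1. For i ∈ {1,…,n} let m_i = min_{j ∈ {1,…,n}, j ≠ i} Y_j and a_i = Y_i + m_i − min{Y_1,…,Y_n}. Then (a) a_i = max(Y_i, m_i) for each i ≤ n; and (b) for every α ∈ (0,1) with (n+1)α not an integer and r := ⌊(n+1)α⌋ satisfying 1 ≤ r ≤ n, the conformal prediction region {y ∈ ℝ : #{i ∈ {1,…,n+1} : μ_i(y) ≥ μ_{n+1}(y)} > (n+1)α} equals the one-sided interval {y ∈ ℝ : y ≤ a_{(n+1−r)}}, where a_{(k)} denotes the k-th smallest value among a_1,…,a_n. -/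

import Mathlib

/-!
With `Y_{n+1} = y`, the score `μ_{n+1}(y)` is at most `μ_k(y)` for `k ≤ n` exactly when
`min(Y_k, m_k) + y ≤ min(y, m_k) + Y_k`, i.e. when `y ≤ max(Y_k, m_k) = a_k`. Hence the count
in the plausibility is `1 + #{k : y ≤ a_k}`, and exceeding `(n+1)α` means that at least
`r = ⌊(n+1)α⌋` of the `a_k` are `≥ y`, which for the sorted values means `y ≤ a_{(n+1-r)}`.
-/

open Finset

theorem Finset.inf'_eq_inf_inf'_erase {ι α : Type*} [DecidableEq ι] [SemilatticeInf α]
    {s : Finset ι} (f : ι → α) {k : ι} (hk : k ∈ s) (h : s.Nonempty) (h' : (s.erase k).Nonempty) :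
    s.inf' h f = f k ⊓ (s.erase k).inf' h' f :=
  (inf'_congr h (insert_erase hk).symm fun _ _ => rfl).trans (inf'_insert h' f)

namespace Fin

variable {α : Type*} {n : ℕ}

theorem card_filter_univ_castSucc (p : Fin (n + 1) → Prop) [DecidablePred p] :
    #{x | p x} = if p (last n) then #{x | p (castSucc x)} + 1 else #{x | p (castSucc x)} := by
  rw [univ_castSuccEmb, filter_cons, apply_ite Finset.card, card_cons, filter_map, card_map]
  rfl

theorem inf'_erase_last_snoc [SemilatticeInf α] (Y : Fin n → α) (y : α)
    (h : ((univ : Finset (Fin (n + 1))).erase (last n)).Nonempty)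
    (h' : (univ : Finset (Fin n)).Nonempty) :
    (univ.erase (last n)).inf' h (snoc Y y : Fin (n + 1) → α) = univ.inf' h' Y :=
  eq_of_forall_le_iff fun z => by
    simp [le_inf'_iff, forall_fin_succ', (castSucc_lt_last _).ne]

theorem inf'_erase_castSucc_snoc [SemilatticeInf α] (Y : Fin n → α) (y : α) (k : Fin n)
    (h : ((univ : Finset (Fin (n + 1))).erase k.castSucc).Nonempty)
    (h' : (univ.erase k).Nonempty) :
    (univ.erase k.castSucc).inf' h (snoc Y y : Fin (n + 1) → α) =
      y ⊓ (univ.erase k).inf' h' Y :=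
  eq_of_forall_le_iff fun z => by
    simp [le_inf'_iff, forall_fin_succ', (castSucc_lt_last _).ne', and_comm]

end Fin

theorem min_add_le_min_add_iff_le_max {α : Type*} [AddCommGroup α] [LinearOrder α]
    [IsOrderedAddMonoid α] (u v y : α) :
    min u v + y ≤ min y v + u ↔ y ≤ max u v := by
  grind

theorem Monotone.le_apply_iff_sub_le_card {α : Type*} [Preorder α] [DecidableLE α] {n : ℕ}
    {b : Fin n → α} (hb : Monotone b) (x : Fin n) (y : α) :
    y ≤ b x ↔ n - x ≤ #{i | y ≤ b i} := by
  constructor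
  · intro hy
    rw [← Fin.card_Ici]
    exact card_le_card fun i hi => mem_filter.mpr ⟨mem_univ i, hy.trans (hb (mem_Ici.mp hi))⟩
  · intro hc
    by_contra hy
    have hsub : #{i | y ≤ b i} ≤ #(Ioi x) := card_le_card fun i hi => by
      rw [mem_Ioi]
      by_contra hle
      exact hy ((mem_filter.mp hi).2.trans (hb (not_lt.mp hle)))
    rw [Fin.card_Ioi] at hsub
    omega

theorem le_sort_iff_le_card {α : Type*} [LinearOrder α] {n : ℕ} (a : Fin n → α) {r : ℕ}
    (hr : 1 ≤ r) (hrn : r ≤ n) (y : α) :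
    y ≤ (a ∘ Tuple.sort a) ⟨n - r, by omega⟩ ↔ r ≤ #{i | y ≤ a i} := by
  have hperm : #{i | y ≤ (a ∘ Tuple.sort a) i} = #{i | y ≤ a i} :=
    card_equiv (Tuple.sort a) (by simp)
  rw [(Tuple.monotone_sort a).le_apply_iff_sub_le_card, Fin.val_mk, Nat.sub_sub_self hrn, hperm]

theorem lt_natCast_add_one_iff_le_of_floor {α : Type*} [Ring α] [LinearOrder α]
    [IsStrictOrderedRing α] [FloorRing α] {t : α} {r : ℕ} (hr : (r : ℤ) = ⌊t⌋) (c : ℕ) :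
    t < c + 1 ↔ r ≤ c := by
  have h := Int.floor_lt (a := t) (z := c + 1)
  push_cast at h
  rw [← h, ← hr]
  omega

/-- Example 5 of the paper (answer to Questions (V) and (VIII)): for the
non-conformity scores `μ_i(y) = (Σ_j X_j) + min_{j ≠ i} Y_j + Y_i` (with
`Y_{n+1} = y`), one has (a) `a_i = max(Y_i, m_i)`, and (b) the conformal
prediction region `{y : #{i : μ_i(y) ≥ μ_{n+1}(y)} > (n+1)α}` is the one-sided
interval `(-∞, a_{(n+1−r)}]`, where `r = ⌊(n+1)α⌋` and `a_{(k)}` is the k-th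
smallest of `a_1, …, a_n`. -/
theorem stmt_9
    (n : ℕ) (hn : 2 ≤ n)
    (X : Fin (n + 1) → ℝ) (Y : Fin n → ℝ)
    (μ : ℝ → Fin (n + 1) → ℝ)
    (hμ : ∀ (y : ℝ) (i : Fin (n + 1)),
      μ y i = (∑ j, X j)
        + (Finset.univ.erase i).inf'
            (by
              rw [← Finset.card_pos, Finset.card_erase_of_mem (Finset.mem_univ i),
                Finset.card_univ, Fintype.card_fin]
              omega) (Fin.snoc Y y : Fin (n + 1) → ℝ)
        + (Fin.snoc Y y : Fin (n + 1) → ℝ) i)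
    (m : Fin n → ℝ)
    (hm : ∀ i : Fin n,
      m i = (Finset.univ.erase i).inf'
        (by
          rw [← Finset.card_pos, Finset.card_erase_of_mem (Finset.mem_univ i),
            Finset.card_univ, Fintype.card_fin]
          omega) Y)
    (a : Fin n → ℝ)
    (ha : ∀ i : Fin n,
      a i = Y i + m i
        - Finset.univ.inf'
            (by rw [← Finset.card_pos, Finset.card_univ, Fintype.card_fin]; omega) Y) :
    (∀ i : Fin n, a i = max (Y i) (m i)) ∧
    (∀ (α : ℝ) (_ : α ∈ Set.Ioo (0 : ℝ) 1)
        (_ : ∀ k : ℤ, ((n : ℝ) + 1) * α ≠ (k : ℝ))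
        (r : ℕ) (_ : (r : ℤ) = ⌊((n : ℝ) + 1) * α⌋) (_ : 1 ≤ r) (_ : r ≤ n),
        {y : ℝ | ((n : ℝ) + 1) * α <
            ((Finset.univ.filter
              (fun i : Fin (n + 1) => μ y (Fin.last n) ≤ μ y i)).card : ℝ)}
          = Set.Iic ((a ∘ Tuple.sort a) ⟨n - r, by omega⟩)) := by
  have hY : (univ : Finset (Fin n)).Nonempty := univ_nonempty_iff.mpr ⟨⟨0, by omega⟩⟩
  have hmin : ∀ k, univ.inf' hY Y = min (Y k) (m k) := fun k => by
    rw [hm k]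
    exact inf'_eq_inf_inf'_erase Y (mem_univ k) hY _
  have hmax : ∀ k, a k = max (Y k) (m k) := fun k => by
    rw [ha k, hmin k, ← min_add_max (Y k) (m k), add_sub_cancel_left]
  refine ⟨hmax, fun α _ _ r hr hr1 hrn => ?_⟩
  have hcount : ∀ y, #{i | μ y (Fin.last n) ≤ μ y i} = #{k | y ≤ a k} + 1 := fun y => by
    have hlast : μ y (Fin.last n) = ∑ j, X j + univ.inf' hY Y + y := by
      rw [hμ, Fin.snoc_last, Fin.inf'_erase_last_snoc Y y _ hY]
    have hcast : ∀ k, μ y k.castSucc = ∑ j, X j + min y (m k) + Y k := fun k => by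
      rw [hμ, Fin.snoc_castSucc, Fin.inf'_erase_castSucc_snoc Y y k, hm k]
    rw [Fin.card_filter_univ_castSucc, if_pos le_rfl]
    refine congrArg (· + 1) (congrArg card (filter_congr fun k _ => ?_))
    rw [hlast, hcast, hmin k, hmax k, add_assoc, add_assoc, add_le_add_iff_left]
    exact min_add_le_min_add_iff_le_max (Y k) (m k) y
  ext y
  rw [Set.mem_ofPred_eq, Set.mem_Iic, hcount, le_sort_iff_le_card a hr1 hrn, Nat.cast_add_one,
    lt_natCast_add_one_iff_le_of_floor hr]
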